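/- In any multipartite tournament, either there exists a 2-Duke, or there exist at least four distinct 3-Dukes. -/

import Mathlib

/-! Induction on the number of vertices; assume there is no 2-Duke. Among the non-eclipsed
vertices pick `d` whose set of vertices reachable within two steps is maximal for inclusion. No
vertex `Covers` `d`: climbing it to a non-eclipsed vertex of its partite set with a larger out-set
would give a vertex reaching strictly more within two steps. A vertex that `d` misses within three
steps would cover `d`, so `d` is a 3-Duke. Likewise any `c` in another partite set that `d` misses
within two steps (one exists, `d` not being a 2-Duke) is a 3-Duke: a vertex it misses within three
steps would cover or eclipse `d`.

For a vertex `x` that is not a 2-Duke, every vertex other than `x` outside `spawnSet x` (the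
in-neighbours of `x` and the rest of its partite set) is an out-neighbour of `x`. By induction
the tournament induced on `spawnSet x` has four 3-Dukes, which stay 3-Dukes, or a 2-Duke, which
cannot peck `x` and so is a 3-Duke in the partite set of `x` other than `x`. Applied to `d` and
`c`, this gives four distinct 3-Dukes. -/

/-- An orientation of a complete multipartite graph: vertices `V`, partite sets
given as fibers of `part : V → ι`, and `peck` the arc relation. Between any two
vertices in different partite sets there is exactly one arc, and there are no
arcs within a partite set. -/
structure MTour (V : Type*) (ι : Type*) where
  part : V → ι
  peck : V → V → Prop
  complete : ∀ u v, part u ≠ part v → peck u v ∨ peck v u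
  inter : ∀ u v, peck u v → part u ≠ part v
  asymm : ∀ u v, peck u v → ¬ peck v u

namespace MTour

variable {V ι : Type*}

/-- There is a directed path of length at most `m` from `d` to `c`. -/
def hasPath (T : MTour V ι) (m : ℕ) (d c : V) : Prop :=
  ∃ k ≤ m, ∃ f : ℕ → V, f 0 = d ∧ f k = c ∧ ∀ i < k, T.peck (f i) (f (i + 1))

/-- `d` is an `m`-Duke: every vertex in a different partite set is reachable
from `d` by a directed path of length at most `m`. -/
def isDuke (T : MTour V ι) (m : ℕ) (d : V) : Prop :=
  ∀ c, T.part c ≠ T.part d → T.hasPath m d c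

/-- `d` is an `m`-King: every other vertex is reachable from `d` by a directed
path of length at most `m`. -/
def isKing (T : MTour V ι) (m : ℕ) (d : V) : Prop :=
  ∀ c, c ≠ d → T.hasPath m d c

/-- The out-degree of a vertex. -/
noncomputable def outDeg (T : MTour V ι) (v : V) : ℕ :=
  Nat.card {w // T.peck v w}

/-- `e` eclipses `d`: same partite set, `e` pecks everything `d` pecks, and
at least one vertex `d` does not peck. -/
def eclipses (T : MTour V ι) (e d : V) : Prop :=
  T.part e = T.part d ∧ (∀ c, T.peck d c → T.peck e c) ∧ ∃ c, T.peck e c ∧ ¬ T.peck d c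

/-- `d` is non-eclipsed: no vertex of its partite set eclipses it. -/
def nonEclipsed (T : MTour V ι) (d : V) : Prop :=
  ∀ e, ¬ T.eclipses e d

/-- Partite set `i` dominates partite set `j`: some vertex of `i` pecks all of `j`. -/
def Dominates (T : MTour V ι) (i j : ι) : Prop :=
  ∃ v, T.part v = i ∧ ∀ w, T.part w = j → T.peck v w

end MTour

namespace MTour

variable {V ι : Type*} {T : MTour V ι} {m n : ℕ} {a b c d f x y z : V}

lemma peck_irrefl (v : V) : ¬ T.peck v v := fun h => T.asymm v v h h

lemma hasPath_self (m : ℕ) (d : V) : T.hasPath m d d :=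
  ⟨0, Nat.zero_le m, fun _ => d, rfl, rfl, fun _ hi => absurd hi (Nat.not_lt_zero _)⟩

lemma hasPath.mono (hmn : m ≤ n) (h : T.hasPath m d c) : T.hasPath n d c :=
  let ⟨k, hk, f, hf⟩ := h
  ⟨k, hk.trans hmn, f, hf⟩

lemma hasPath_of_peck (h : T.peck d c) : T.hasPath 1 d c :=
  ⟨1, le_rfl, fun i => if i = 0 then d else c, rfl, rfl, by simpa using h⟩

lemma hasPath.trans (h₁ : T.hasPath m a b) (h₂ : T.hasPath n b c) : T.hasPath (m + n) a c := by
  obtain ⟨k, hk, f, hf0, hfk, hf⟩ := h₁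
  obtain ⟨l, hl, g, hg0, hgl, hg⟩ := h₂
  refine ⟨k + l, by omega, fun i => if i < k then f i else g (i - k), ?_, by simpa using hgl, ?_⟩
  · rcases Nat.eq_zero_or_pos k with rfl | hk0
    · simp [hg0, ← hfk, hf0]
    · simp [hk0, hf0]
  · intro i hi
    by_cases hik : i + 1 < k
    · simpa [hik, show i < k by omega] using hf i (by omega)
    by_cases hik' : i + 1 = k
    · subst hik'
      simpa [hg0, ← hfk] using hf i (by omega)
    · simpa [show ¬ i < k by omega, hik, show i + 1 - k = i - k + 1 by omega]
        using hg (i - k) (by omega)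

lemma hasPath_two_of_pecks (h₁ : T.peck a b) (h₂ : T.peck b c) : T.hasPath 2 a c :=
  (hasPath_of_peck h₁).trans (hasPath_of_peck h₂)

lemma hasPath_two_iff :
    T.hasPath 2 d x ↔ x = d ∨ T.peck d x ∨ ∃ b, T.peck d b ∧ T.peck b x := by
  constructor
  · rintro ⟨k, hk, f, rfl, rfl, hf⟩
    interval_cases k
    · exact Or.inl rfl
    · exact Or.inr (Or.inl (hf 0 one_pos))
    · exact Or.inr (Or.inr ⟨f 1, hf 0 two_pos, hf 1 one_lt_two⟩)
  · rintro (rfl | h | ⟨b, h₁, h₂⟩)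
    · exact hasPath_self 2 x
    · exact (hasPath_of_peck h).mono one_le_two
    · exact hasPath_two_of_pecks h₁ h₂

lemma hasPath.exists_peck (h : T.hasPath m d c) (hcd : c ≠ d) : ∃ b, T.peck d b := by
  obtain ⟨k, -, f, rfl, rfl, hf⟩ := h
  rcases Nat.eq_zero_or_pos k with rfl | hk
  · exact absurd rfl hcd
  · exact ⟨f 1, hf 0 hk⟩

lemma peck_of_hasPath_of_not_hasPath_succ (hx : T.hasPath m d x) (hc : ¬ T.hasPath (m + 1) d c)
    (hxc : T.part x ≠ T.part c) : T.peck c x :=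
  (T.complete c x hxc.symm).resolve_right fun h => hc (hx.trans (hasPath_of_peck h))

lemma isDuke.mono (hmn : m ≤ n) (h : T.isDuke m d) : T.isDuke n d :=
  fun c hc => (h c hc).mono hmn

lemma exists_peck_of_not_isDuke (h : ¬ T.isDuke (m + 1) d) :
    ∃ c, T.part c ≠ T.part d ∧ ¬ T.hasPath (m + 1) d c ∧ T.peck c d := by
  simp only [isDuke, not_forall] at h
  obtain ⟨c, hcd, hc⟩ := h
  exact ⟨c, hcd, hc, peck_of_hasPath_of_not_hasPath_succ (hasPath_self m d) hc hcd.symm⟩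

lemma exists_nonEclipsed_out_superset [Finite V] (v : V) :
    ∃ e, T.nonEclipsed e ∧ T.part e = T.part v ∧ ∀ w, T.peck v w → T.peck e w := by
  obtain ⟨e, ⟨hev, hve⟩, hmax⟩ := Set.Finite.exists_maximalFor (fun w => {x | T.peck w x})
    {w | T.part w = T.part v ∧ ∀ x, T.peck v x → T.peck w x} (Set.toFinite _) ⟨v, rfl, fun _ => id⟩
  refine ⟨e, ?_, hev, hve⟩
  rintro f ⟨hfe, hef, z, hfz, hez⟩
  exact hez (hmax ⟨hfe.trans hev, fun x hx => hef x (hve x hx)⟩ hef hfz)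

def reach2 (T : MTour V ι) (v : V) : Set V := {x | T.hasPath 2 v x}

def Covers (T : MTour V ι) (c d : V) : Prop :=
  T.peck c d ∧ (∀ b, T.peck d b → T.part b ≠ T.part c → T.peck c b) ∧
    ∀ b x, T.peck d b → T.part b = T.part c → T.peck b x → T.peck c x

lemma Covers.of_out_subset (h : T.Covers c d) (hfc : T.part f = T.part c)
    (hcf : ∀ w, T.peck c w → T.peck f w) : T.Covers f d :=
  ⟨hcf _ h.1, fun b hb hbf => hcf _ (h.2.1 b hb (hfc ▸ hbf)),
    fun b x hb hbf hbx => hcf _ (h.2.2 b x hb (hfc ▸ hbf) hbx)⟩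

lemma Covers.reach2_ssubset (h : T.Covers f d) : T.reach2 d ⊂ T.reach2 f := by
  obtain ⟨hfd, hout, hsame⟩ := h
  refine Set.ssubset_iff_of_subset ?_ |>.2 ⟨f, hasPath_self 2 f, ?_⟩
  · intro x hx
    rcases hasPath_two_iff.1 hx with rfl | hdx | ⟨b, hdb, hbx⟩
    · exact (hasPath_of_peck hfd).mono one_le_two
    · exact hasPath_two_of_pecks hfd hdx
    · by_cases hbf : T.part b = T.part f
      · exact (hasPath_of_peck (hsame b x hdb hbf hbx)).mono one_le_two
      · exact hasPath_two_of_pecks (hout b hdb hbf) hbx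
  · intro hf
    rcases hasPath_two_iff.1 hf with rfl | hdf | ⟨b, hdb, hbf⟩
    · exact peck_irrefl f hfd
    · exact T.asymm _ _ hfd hdf
    · exact T.asymm _ _ (hout b hdb (T.inter _ _ hbf)) hbf

def IsReach2Maximal (T : MTour V ι) (d : V) : Prop :=
  MaximalFor T.nonEclipsed T.reach2 d

lemma IsReach2Maximal.not_covers [Finite V] (hd : T.IsReach2Maximal d) : ¬ T.Covers c d :=
  fun h => by
    obtain ⟨f, hf, hfc, hcf⟩ := exists_nonEclipsed_out_superset (T := T) c
    exact MaximalFor.not_gt hd hf (h.of_out_subset hfc hcf).reach2_ssubset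

lemma exists_isReach2Maximal [Finite V] [Nonempty V] : ∃ d, T.IsReach2Maximal d :=
  let ⟨e, he, _⟩ := exists_nonEclipsed_out_superset (T := T) (Classical.arbitrary V)
  Set.Finite.exists_maximalFor _ _ (Set.toFinite _) ⟨e, he⟩

lemma IsReach2Maximal.isDuke_three [Finite V] (hd : T.IsReach2Maximal d) :
    T.isDuke 3 d := by
  intro c hcd
  by_contra hc
  have hpeck : ∀ x, T.hasPath 2 d x → T.part x ≠ T.part c → T.peck c x :=
    fun x hx => peck_of_hasPath_of_not_hasPath_succ hx hc
  refine hd.not_covers ⟨hpeck d (hasPath_self 2 d) hcd.symm,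
    fun b hdb => hpeck b ((hasPath_of_peck hdb).mono one_le_two), ?_⟩
  intro b x hdb hbc hbx
  exact hpeck x (hasPath_two_of_pecks hdb hbx) (hbc ▸ (T.inter _ _ hbx).symm)

lemma IsReach2Maximal.isDuke_three_of_not_hasPath_two [Finite V]
    (hd : T.IsReach2Maximal d) (hcd : T.part c ≠ T.part d)
    (hdc : ¬ T.hasPath 2 d c) : T.isDuke 3 c := by
  have hc_out : ∀ a, T.peck d a → T.part a ≠ T.part c → T.peck c a :=
    fun a hda => peck_of_hasPath_of_not_hasPath_succ (hasPath_of_peck hda) hdc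
  have hc_d : T.peck c d := peck_of_hasPath_of_not_hasPath_succ (hasPath_self 1 d) hdc hcd.symm
  have hc_reach : ∀ a, T.peck d a → T.hasPath 2 c a := fun a hda => by
    by_cases hac : T.part a = T.part c
    · exact hasPath_two_of_pecks hc_d hda
    · exact (hasPath_of_peck (hc_out a hda hac)).mono one_le_two
  intro z hzc
  by_contra hz
  have hz_peck : ∀ x, T.hasPath 2 c x → T.part x ≠ T.part z → T.peck z x :=
    fun x hx => peck_of_hasPath_of_not_hasPath_succ hx hz
  have hz_out : ∀ a, T.peck d a → T.part a ≠ T.part z → T.peck z a :=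
    fun a hda => hz_peck a (hc_reach a hda)
  by_cases hzd : T.part z = T.part d
  · refine hd.1 z ⟨hzd, fun a hda => hz_out a hda (hzd ▸ (T.inter _ _ hda).symm), c, ?_, ?_⟩
    · exact hz_peck c (hasPath_self 2 c) hzc.symm
    · exact fun h => hdc ((hasPath_of_peck h).mono one_le_two)
  · refine hd.not_covers ⟨hz_peck d ((hasPath_of_peck hc_d).mono one_le_two) (Ne.symm hzd),
      hz_out, ?_⟩
    intro b x hdb hbz hbx
    have hcb : T.peck c b := hc_out b hdb (hbz ▸ hzc)
    exact hz_peck x (hasPath_two_of_pecks hcb hbx) (hbz ▸ (T.inter _ _ hbx).symm)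

def restrict (T : MTour V ι) (s : Set V) : MTour s ι where
  part v := T.part v
  peck a b := T.peck a b
  complete u v := T.complete u v
  inter u v := T.inter u v
  asymm u v := T.asymm u v

lemma hasPath.of_restrict {s : Set V} {a b : s} (h : (T.restrict s).hasPath m a b) :
    T.hasPath m a b :=
  let ⟨k, hk, f, hf0, hfk, hf⟩ := h
  ⟨k, hk, fun i => f i, congrArg Subtype.val hf0, congrArg Subtype.val hfk, hf⟩

def spawnSet (T : MTour V ι) (x : V) : Set V :=
  {v | T.peck v x ∨ (T.part v = T.part x ∧ v ≠ x)}

lemma not_mem_spawnSet_self : x ∉ T.spawnSet x := by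
  rintro (h | ⟨-, h⟩)
  exacts [peck_irrefl x h, h rfl]

lemma peck_of_not_mem_spawnSet (hz : z ∉ T.spawnSet x) (hzx : z ≠ x) : T.peck x z := by
  simp only [spawnSet, Set.mem_ofPred_eq, not_or, not_and_not_right] at hz
  exact (T.complete x z fun h => hzx (hz.2 h.symm)).resolve_right hz.1

lemma hasPath_two_of_not_mem_spawnSet (hyx : T.peck y x) (hz : z ∉ T.spawnSet x) :
    T.hasPath 2 y z := by
  by_cases hzx : z = x
  · exact hzx ▸ (hasPath_of_peck hyx).mono one_le_two
  · exact hasPath_two_of_pecks hyx (peck_of_not_mem_spawnSet hz hzx)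

lemma isDuke_of_restrict_spawnSet {y : T.spawnSet x}
    (hy : (T.restrict (T.spawnSet x)).isDuke m y)
    (hout : ∀ z, z ∉ T.spawnSet x → T.part z ≠ T.part y → T.hasPath m y z) : T.isDuke m y := by
  intro z hzy
  by_cases hz : z ∈ T.spawnSet x
  · exact (hy ⟨z, hz⟩ hzy).of_restrict
  · exact hout z hz hzy

lemma isDuke_two_of_restrict_spawnSet {y : T.spawnSet x}
    (hy : (T.restrict (T.spawnSet x)).isDuke 2 y) (hyx : T.peck y x) : T.isDuke 2 y :=
  isDuke_of_restrict_spawnSet hy fun _ hz _ => hasPath_two_of_not_mem_spawnSet hyx hz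

/-- A vertex of the partite set of `x` reaches the in-neighbours of `x` inside the spawn set, so
its first step goes to some `b` pecking `x`, and `y → b → x → z`. -/
lemma isDuke_three_of_restrict_spawnSet {y : T.spawnSet x}
    (hy : (T.restrict (T.spawnSet x)).isDuke 3 y) (hx : ∃ w, T.peck w x) : T.isDuke 3 y := by
  refine isDuke_of_restrict_spawnSet hy fun z hz hzy => ?_
  rcases y.2 with hyx | ⟨hyx, -⟩
  · exact (hasPath_two_of_not_mem_spawnSet hyx hz).mono (by norm_num)
  obtain ⟨w, hwx⟩ := hx
  have hwy : T.part w ≠ T.part y := hyx ▸ T.inter _ _ hwx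
  obtain ⟨b, hyb⟩ := (hy ⟨w, Or.inl hwx⟩ hwy).exists_peck fun h => hwy (h ▸ rfl)
  have hbx : T.peck b x := b.2.resolve_right fun h => T.inter _ _ hyb (hyx.trans h.1.symm)
  have hxz : T.peck x z := peck_of_not_mem_spawnSet hz fun h => hzy (h ▸ hyx.symm)
  exact (hasPath_of_peck (T := T) hyb).trans (hasPath_two_of_pecks hbx hxz)

def HasFourDukes (T : MTour V ι) (m : ℕ) : Prop :=
  ∃ d₁ d₂ d₃ d₄, d₁ ≠ d₂ ∧ d₁ ≠ d₃ ∧ d₁ ≠ d₄ ∧ d₂ ≠ d₃ ∧ d₂ ≠ d₄ ∧ d₃ ≠ d₄ ∧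
    T.isDuke m d₁ ∧ T.isDuke m d₂ ∧ T.isDuke m d₃ ∧ T.isDuke m d₄

lemma hasFourDukes_of_pairs {d d' c c' : V} (hd' : d ≠ d') (hd'd : T.part d' = T.part d)
    (hc' : c ≠ c') (hc'c : T.part c' = T.part c) (hdc : T.part d ≠ T.part c)
    (hd : T.isDuke m d) (hdd : T.isDuke m d') (hc : T.isDuke m c) (hcc : T.isDuke m c') :
    T.HasFourDukes m := by
  refine ⟨d, d', c, c', hd', ?_, ?_, ?_, ?_, hc', hd, hdd, hc, hcc⟩ <;>
    refine ne_of_apply_ne T.part ?_ <;> simpa [hd'd, hc'c] using hdc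

lemma hasFourDukes_or_exists_isDuke_three_ne (no2 : ∀ v, ¬ T.isDuke 2 v)
    (h : (∃ y, (T.restrict (T.spawnSet x)).isDuke 2 y) ∨
      (T.restrict (T.spawnSet x)).HasFourDukes 3) :
    T.HasFourDukes 3 ∨ ∃ u, u ≠ x ∧ T.part u = T.part x ∧ T.isDuke 3 u := by
  obtain ⟨w, -, -, hwx⟩ := exists_peck_of_not_isDuke (no2 x)
  have lift (y : T.spawnSet x) (hy : (T.restrict (T.spawnSet x)).isDuke 3 y) : T.isDuke 3 y :=
    isDuke_three_of_restrict_spawnSet hy ⟨w, hwx⟩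
  rcases h with ⟨y, hy⟩ | ⟨y₁, y₂, y₃, y₄, h₁₂, h₁₃, h₁₄, h₂₃, h₂₄, h₃₄, hy₁, hy₂, hy₃, hy₄⟩
  · rcases y.2 with hyx | ⟨hyx, hy_ne⟩
    · exact absurd (isDuke_two_of_restrict_spawnSet hy hyx) (no2 y)
    · exact Or.inr ⟨y, hy_ne, hyx, lift y (hy.mono (by norm_num))⟩
  · exact Or.inl ⟨y₁, y₂, y₃, y₄, Subtype.coe_ne_coe.2 h₁₂, Subtype.coe_ne_coe.2 h₁₃,
      Subtype.coe_ne_coe.2 h₁₄, Subtype.coe_ne_coe.2 h₂₃, Subtype.coe_ne_coe.2 h₂₄,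
      Subtype.coe_ne_coe.2 h₃₄, lift y₁ hy₁, lift y₂ hy₂, lift y₃ hy₃, lift y₄ hy₄⟩

lemma spawnSet_nonempty (hx : ¬ T.isDuke 2 x) : Nonempty (T.spawnSet x) :=
  let ⟨w, _, _, hwx⟩ := exists_peck_of_not_isDuke hx
  ⟨⟨w, Or.inl hwx⟩⟩

end MTour

/-- In any multipartite tournament, either there is a 2-Duke or there are
four distinct 3-Dukes. -/
theorem stmt8 {V ι : Type*} [Finite V] [Nonempty V] (T : MTour V ι) :
    (∃ d, T.isDuke 2 d) ∨
    ∃ d₁ d₂ d₃ d₄, d₁ ≠ d₂ ∧ d₁ ≠ d₃ ∧ d₁ ≠ d₄ ∧ d₂ ≠ d₃ ∧ d₂ ≠ d₄ ∧ d₃ ≠ d₄ ∧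
      T.isDuke 3 d₁ ∧ T.isDuke 3 d₂ ∧ T.isDuke 3 d₃ ∧ T.isDuke 3 d₄ := by
  induction hn : Nat.card V using Nat.strong_induction_on generalizing V with
  | _ n ih =>
    refine or_iff_not_imp_left.2 fun h2 => ?_
    have no2 : ∀ v, ¬ T.isDuke 2 v := fun v hv => h2 ⟨v, hv⟩
    have partner (x : V) :
        T.HasFourDukes 3 ∨ ∃ u, u ≠ x ∧ T.part u = T.part x ∧ T.isDuke 3 u := by
      have := MTour.spawnSet_nonempty (no2 x)
      exact MTour.hasFourDukes_or_exists_isDuke_three_ne no2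
        (ih _ (hn ▸ Finite.card_subtype_lt MTour.not_mem_spawnSet_self) _ rfl)
    obtain ⟨d, hd⟩ := T.exists_isReach2Maximal
    obtain ⟨c, hcd, hdc, -⟩ := MTour.exists_peck_of_not_isDuke (no2 d)
    rcases partner d with h4 | ⟨d', hd', hd'd, hd'3⟩
    · exact h4
    rcases partner c with h4 | ⟨c', hc', hc'c, hc'3⟩
    · exact h4
    exact MTour.hasFourDukes_of_pairs hd'.symm hd'd hc'.symm hc'c hcd.symm hd.isDuke_three hd'3
      (hd.isDuke_three_of_not_hasPath_two hcd hdc) hc'3
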